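/- arXiv:1506.05062 — 2 statements merged into one kernel-verified Lean document; each statement's English description precedes it below -/
import Mathlib

section
/- Let (X,d) be a complete metric space and T : X → X satisfy d(Tx,Ty) ≤ η(d(x,y)) for all x,y ∈ X where η(t) < t for t > 0 and t ↦ η(t)/t is nondecreasing on (0,∞). Define φ(x,y) = d(x,y)/(1 − η(d(x,y))/d(x,y)) for x ≠ y and φ(x,x) = 0. Then d(x,y) ≤ φ(x,y) − φ(Tx,Ty) for all x,y ∈ X with Tx ≠ Ty. -/
/-- Key inequality reducing nonlinear contractions to the Caristi-type condition. -/
theorem key_caristi_inequality {X : Type*} [MetricSpace X]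
    (T : X → X) (η : ℝ → ℝ)
    (hη0 : ∀ t, 0 ≤ t → 0 ≤ η t)
    (hηlt : ∀ t, 0 < t → η t < t)
    (hηmono : ∀ s t, 0 < s → s ≤ t → η s / s ≤ η t / t)
    (h : ∀ x y, dist (T x) (T y) ≤ η (dist x y)) :
    ∀ x y, T x ≠ T y →
      dist x y ≤ dist x y / (1 - η (dist x y) / dist x y)
        - dist (T x) (T y) / (1 - η (dist (T x) (T y)) / dist (T x) (T y)) := by
  intro x y hT
  have hxy : x ≠ y := fun he => hT (by rw [he])
  set D := dist x y with hDdef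
  set d' := dist (T x) (T y) with hd'def
  have hD : 0 < D := dist_pos.mpr hxy
  have hd' : 0 < d' := dist_pos.mpr hT
  have hle : d' ≤ η D := h x y
  have hηD : η D < D := hηlt D hD
  have hc : η D / D < 1 := (div_lt_one hD).mpr hηD
  have hc1 : 0 < 1 - η D / D := by linarith
  have hmono : η d' / d' ≤ η D / D := hηmono d' D hd' (hle.trans hηD.le)
  have hc1' : 0 < 1 - η d' / d' := by linarith
  have h1 : d' / (1 - η d' / d') ≤ η D / (1 - η D / D) := by
    apply div_le_div₀ (hη0 D hD.le) hle hc1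
    linarith
  have h2 : D / (1 - η D / D) - η D / (1 - η D / D) = D := by
    rw [div_sub_div_same]
    field_simp
    rw [div_self (by linarith : D - η D ≠ 0)]
  linarith
end

section
/- Let Z, T be nonempty sets, f : Z×T → ℝ and ℑ : Z×T×ℝ → ℝ bounded, η : Z×T → Z, and define S on B(Z) by S(h)(x) = sup_{y∈T}{f(x,y) + ℑ(x,y,h(η(x,y)))}. Suppose for all h,k ∈ B(Z): if 0 < d(h,k) < 1 then |ℑ(x,y,h(x)) − ℑ(x,y,k(x))| ≤ d(h,k)²/2, and if d(h,k) ≥ 1 then |ℑ(x,y,h(x)) − ℑ(x,y,k(x))| ≤ (2/3)d(h,k), for all x ∈ Z, y ∈ T. Then there exists h* ∈ B(Z) with S(h*) = h*, i.e., the functional equation p(x) = sup_{y∈T}{f(x,y) + ℑ(x,y,p(η(x,y)))} has a bounded solution. -/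
/-- Existence of a bounded solution of the dynamic-programming functional
equation p(x) = sup_y { f(x,y) + ℑ(x,y,p(η(x,y))) }. -/
theorem functional_equation_bounded_solution {Z T : Type*}
    [TopologicalSpace Z] [DiscreteTopology Z] [Nonempty Z] [Nonempty T]
    (f : Z → T → ℝ) (Im : Z → T → ℝ → ℝ) (η : Z → T → Z)
    (hf : ∃ C, ∀ x y, |f x y| ≤ C)
    (hIm : ∃ C, ∀ x y r, |Im x y r| ≤ C)
    (S : BoundedContinuousFunction Z ℝ → BoundedContinuousFunction Z ℝ)
    (hS : ∀ h x, S h x = ⨆ y : T, (f x y + Im x y (h (η x y))))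
    (hcase1 : ∀ h k : BoundedContinuousFunction Z ℝ,
      0 < dist h k → dist h k < 1 →
      ∀ x y, |Im x y (h x) - Im x y (k x)| ≤ dist h k ^ 2 / 2)
    (hcase2 : ∀ h k : BoundedContinuousFunction Z ℝ,
      1 ≤ dist h k →
      ∀ x y, |Im x y (h x) - Im x y (k x)| ≤ 2 / 3 * dist h k) :
    ∃ hstar : BoundedContinuousFunction Z ℝ, S hstar = hstar := by
  obtain ⟨Cf, hCf⟩ := hf
  obtain ⟨CI, hCI⟩ := hIm
  -- Key pointwise estimate: in all cases, the Im-increment is ≤ (2/3)·dist h k.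
  have key : ∀ (h k : BoundedContinuousFunction Z ℝ) (x : Z) (y : T) (z : Z),
      |Im x y (h z) - Im x y (k z)| ≤ 2 / 3 * dist h k := by
    intro h k x y z
    set h' : BoundedContinuousFunction Z ℝ := BoundedContinuousFunction.const Z (h z)
    set k' : BoundedContinuousFunction Z ℝ := BoundedContinuousFunction.const Z (k z)
    have hd' : dist h' k' = |h z - k z| := by
      simp [h', k', BoundedContinuousFunction.dist_eq_iSup, Real.dist_eq]
    have hle : dist h' k' ≤ dist h k := by
      rw [hd', ← Real.dist_eq]
      exact BoundedContinuousFunction.dist_coe_le_dist z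
    have hdnn : (0 : ℝ) ≤ dist h k := dist_nonneg
    rcases eq_or_lt_of_le (dist_nonneg : (0:ℝ) ≤ dist h' k') with h0 | hpos
    · have hz : |h z - k z| = 0 := by rw [← hd']; exact h0.symm
      have : h z = k z := by
        have := abs_eq_zero.mp hz
        linarith
      rw [this]
      simp
    · rcases lt_or_ge (dist h' k') 1 with hlt | hge
      · have := hcase1 h' k' hpos hlt x y
        simp only [h', k', BoundedContinuousFunction.const_apply] at this
        calc |Im x y (h z) - Im x y (k z)| ≤ dist h' k' ^ 2 / 2 := this
          _ ≤ 2 / 3 * dist h' k' := by nlinarith [hpos, hlt]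
          _ ≤ 2 / 3 * dist h k := by linarith
      · have := hcase2 h' k' hge x y
        simp only [h', k', BoundedContinuousFunction.const_apply] at this
        calc |Im x y (h z) - Im x y (k z)| ≤ 2 / 3 * dist h' k' := this
          _ ≤ 2 / 3 * dist h k := by linarith
  -- S is Lipschitz with constant 2/3.
  have hbdd : ∀ (h : BoundedContinuousFunction Z ℝ) (x : Z),
      BddAbove (Set.range fun y : T => f x y + Im x y (h (η x y))) := by
    intro h x
    refine ⟨Cf + CI, ?_⟩
    rintro _ ⟨y, rfl⟩
    have h1 := hCf x y
    have h2 := hCI x y (h (η x y))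
    obtain ⟨a1, a2⟩ := abs_le.mp h1
    obtain ⟨b1, b2⟩ := abs_le.mp h2
    show f x y + Im x y (h (η x y)) ≤ Cf + CI
    linarith
  have hlip : ∀ h k : BoundedContinuousFunction Z ℝ,
      dist (S h) (S k) ≤ 2 / 3 * dist h k := by
    intro h k
    refine BoundedContinuousFunction.dist_le (by positivity) |>.mpr fun x => ?_
    rw [Real.dist_eq, hS h x, hS k x]
    have step : ∀ (a b : BoundedContinuousFunction Z ℝ),
        (⨆ y : T, (f x y + Im x y (a (η x y)))) ≤
        (⨆ y : T, (f x y + Im x y (b (η x y)))) + 2 / 3 * dist a b := by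
      intro a b
      refine ciSup_le fun y => ?_
      have h1 : f x y + Im x y (a (η x y)) ≤
          f x y + Im x y (b (η x y)) + 2 / 3 * dist a b := by
        have := (abs_le.mp (key a b x y (η x y))).2
        linarith
      exact h1.trans (add_le_add_left (le_ciSup (hbdd b x) y) _)
    have s1 := step h k
    have s2 := step k h
    rw [dist_comm k h] at s2
    rw [abs_le]
    constructor <;> linarith
  have hcontr : ContractingWith (2/3 : NNReal) S := by
    constructor
    · rw [← NNReal.coe_lt_one]; norm_num
    · refine LipschitzWith.of_dist_le_mul fun h k => ?_
      have := hlip h k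
      calc dist (S h) (S k) ≤ 2 / 3 * dist h k := this
        _ = ((2/3 : NNReal) : ℝ) * dist h k := by norm_num
  exact ⟨hcontr.fixedPoint S, hcontr.fixedPoint_isFixedPt⟩
end
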